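/- Let A be a finite ordered alphabet, b ∈ A, and ξ_b: A^+ → A^+ the map that inserts an extra b into every maximal run of consecutive b's and inserts a b between any two adjacent letters d, d' that are both strictly larger than b or both strictly smaller than b. Then for all words x, x' with |x| = |x'|: x ≺ x' if and only if ξ_b(x) ≺ ξ_b(x'), where ≺ is the lexicographic order induced by the order on A. -/

import Mathlib

/-- The lexicographic order on words induced by the order of the alphabet, with the
convention that `u ≺ v` whenever `v` is a proper prefix of `u`. -/
def wlt {A : Type*} [LinearOrder A] (u v : List A) : Prop :=
  (v ≠ u ∧ v <+: u) ∨
    ∃ (p s t : List A) (x y : A), x < y ∧ u = p ++ x :: s ∧ v = p ++ y :: t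

/-- The alternating lexicographic order on words: at the first difference, the order of
letters is used at even (0-based) positions and reversed at odd positions; if `v` is a
proper prefix of `u` then `u ≺_alt v` when `|v|` is even and `v ≺_alt u` when `|v|` is odd. -/
def altlt {A : Type*} [LinearOrder A] (u v : List A) : Prop :=
  (v ≠ u ∧ v <+: u ∧ Even v.length) ∨ (u ≠ v ∧ u <+: v ∧ Odd u.length) ∨
    ∃ (p s t : List A) (x y : A), u = p ++ x :: s ∧ v = p ++ y :: t ∧
      ((Even p.length ∧ x < y) ∨ (Odd p.length ∧ y < x))

/-- `r` is a linear representation (rotation) of the cyclic word represented by `w`. -/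
def isRot {A : Type*} (w r : List A) : Prop := ∃ s t : List A, w = s ++ t ∧ r = t ++ s

/-- `f` is a factor of the cyclic word represented by `w`. -/
def isCFactor {A : Type*} (f w : List A) : Prop := ∃ r : List A, isRot w r ∧ f <:+: r

/-- The cyclic word represented by `w` is singular: every factorization of it into two
nonempty non-palindromes `u`, `v` is synchronizing (`u ≺ u*` iff `v ≺ v*`). -/
def cyclicSingular {A : Type*} [LinearOrder A] (w : List A) : Prop :=
  ∀ u v : List A, u ≠ [] → v ≠ [] → isRot w (u ++ v) →
    u ≠ u.reverse → v ≠ v.reverse → (wlt u u.reverse ↔ wlt v v.reverse)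

/-- `δ_b(w) = Σ_{c>b} |w|_c − Σ_{a<b} |w|_a`. -/
def deltaW {A : Type*} [LinearOrder A] [Fintype A] (w : List A) (b : A) : ℤ :=
  (∑ c ∈ Finset.univ.filter (fun c => b < c), (w.count c : ℤ)) -
    (∑ a ∈ Finset.univ.filter (fun a => a < b), (w.count a : ℤ))

/-- Helper for `ξ_b`: scans adjacent pairs, inserting `b` before the start of each run of
`b`'s and between adjacent letters that are both `> b` or both `< b`. -/
def xiAux {A : Type*} [LinearOrder A] (b : A) : List A → List A
  | [] => []
  | [d] => [d]
  | d :: d' :: l =>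
    if (d ≠ b ∧ d' = b) ∨ (d < b ∧ d' < b) ∨ (b < d ∧ b < d') then
      d :: b :: xiAux b (d' :: l)
    else
      d :: xiAux b (d' :: l)

/-- `ξ_b(x)`: the word obtained from `x` by adding one occurrence of `b` to every maximal
run of consecutive `b`'s and inserting `b` between any two adjacent letters that are both
strictly larger than `b` or both strictly smaller than `b`. -/
def xi {A : Type*} [LinearOrder A] (b : A) (x : List A) : List A :=
  if x.head? = some b then b :: xiAux b x else xiAux b x

/-!
At the first position where `x` and `x'` differ, say with letters `c < c'`,
the images `ξ_b(x)` and `ξ_b(x')` still share the image of the common prefix. After it,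
either both insert a `b` and then continue with `c < c'`, or only one of them inserts a `b`;
in that case the inserted `b` lies between `c` and `c'`, since a `b` is inserted before `c`
but not before `c'` only if `b < c'`, and vice versa only if `c < b`. So `ξ_b` is strictly
monotone on words of equal length, and it reflects `≺` because `≺` is a strict total order.
-/

section Wlt

variable {A : Type*}

/-- `≺` is the lexicographic order of `WithTop A` once every word is closed by the sentinel `⊤`,
which makes a proper prefix larger than its extensions. -/
def wltKey (u : List A) : List (WithTop A) := u.map WithTop.some ++ [⊤]

theorem wltKey_injective : Function.Injective (wltKey (A := A)) := fun _ _ h =>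
  List.map_injective_iff.mpr WithTop.coe_injective ((List.append_left_inj _).mp h)

variable [LinearOrder A]

theorem not_wlt_nil (v : List A) : ¬ wlt [] v := by
  rintro (⟨hne, hpre⟩ | ⟨p, s, t, x, y, -, hu, -⟩)
  · exact hne (List.prefix_nil.mp hpre)
  · simp at hu

theorem wlt_cons_nil (a : A) (u : List A) : wlt (a :: u) [] :=
  Or.inl ⟨(List.cons_ne_nil a u).symm, List.nil_prefix⟩

theorem wlt_cons_cons {a c : A} {u v : List A} :
    wlt (a :: u) (c :: v) ↔ a < c ∨ a = c ∧ wlt u v := by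
  constructor
  · rintro (⟨hne, hpre⟩ | ⟨_ | ⟨d, p⟩, s, t, x, y, hxy, hu, hv⟩)
    · obtain ⟨rfl, hvu⟩ := List.cons_prefix_cons.mp hpre
      exact Or.inr ⟨rfl, Or.inl ⟨fun h => hne (h ▸ rfl), hvu⟩⟩
    · simp only [List.nil_append, List.cons.injEq] at hu hv
      exact Or.inl (hu.1 ▸ hv.1 ▸ hxy)
    · simp only [List.cons_append, List.cons.injEq] at hu hv
      exact Or.inr ⟨hu.1.trans hv.1.symm, Or.inr ⟨p, s, t, x, y, hxy, hu.2, hv.2⟩⟩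
  · rintro (hac | ⟨rfl, hpre | ⟨p, s, t, x, y, hxy, rfl, rfl⟩⟩)
    · exact Or.inr ⟨[], u, v, a, c, hac, rfl, rfl⟩
    · exact Or.inl ⟨fun h => hpre.1 (List.cons.inj h).2, List.cons_prefix_cons.mpr ⟨rfl, hpre.2⟩⟩
    · exact Or.inr ⟨a :: p, s, t, x, y, hxy, rfl, rfl⟩

theorem wlt_cons_of_lt {a c : A} (u v : List A) (h : a < c) : wlt (a :: u) (c :: v) :=
  wlt_cons_cons.mpr (Or.inl h)

theorem wlt_cons (a : A) {u v : List A} (h : wlt u v) : wlt (a :: u) (a :: v) :=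
  wlt_cons_cons.mpr (Or.inr ⟨rfl, h⟩)

theorem wlt_iff_wltKey_lt (u v : List A) : wlt u v ↔ wltKey u < wltKey v := by
  induction u generalizing v with
  | nil => cases v <;> simp [wltKey, not_wlt_nil, List.cons_lt_cons_iff]
  | cons a u ih =>
    cases v with
    | nil => simp [wltKey, wlt_cons_nil, List.cons_lt_cons_iff]
    | cons c v =>
      rw [wlt_cons_cons, ih]
      simp [wltKey, List.cons_lt_cons_iff]

theorem wlt_irrefl (u : List A) : ¬ wlt u u := by
  simp [wlt_iff_wltKey_lt]

theorem wlt_asymm {u v : List A} (h : wlt u v) : ¬ wlt v u := by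
  rw [wlt_iff_wltKey_lt] at h ⊢
  exact lt_asymm h

theorem wlt_trichotomous (u v : List A) : wlt u v ∨ u = v ∨ wlt v u := by
  simpa only [wlt_iff_wltKey_lt, wltKey_injective.eq_iff] using
    lt_trichotomy (wltKey u) (wltKey v)

end Wlt

section Xi

variable {A : Type*} [LinearOrder A] (b : A)

theorem exists_xiAux_cons_eq (d : A) (l : List A) : ∃ u, xiAux b (d :: l) = d :: u := by
  cases l with
  | nil => exact ⟨[], rfl⟩
  | cons e l =>
    simp only [xiAux]
    split <;> exact ⟨_, rfl⟩

variable {b}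

theorem lt_of_insert_not_insert {d c c' : A} (h : c < c')
    (hc : (d ≠ b ∧ c = b) ∨ (d < b ∧ c < b) ∨ (b < d ∧ b < c))
    (hc' : ¬ ((d ≠ b ∧ c' = b) ∨ (d < b ∧ c' < b) ∨ (b < d ∧ b < c'))) : b < c' := by
  push Not at hc'
  rcases hc with ⟨-, rfl⟩ | ⟨hd, -⟩ | ⟨-, hbc⟩
  · exact h
  · exact lt_of_le_of_ne (hc'.2.1 hd) (Ne.symm (hc'.1 hd.ne))
  · exact hbc.trans h

theorem lt_of_not_insert_insert {d c c' : A} (h : c < c')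
    (hc : ¬ ((d ≠ b ∧ c = b) ∨ (d < b ∧ c < b) ∨ (b < d ∧ b < c)))
    (hc' : (d ≠ b ∧ c' = b) ∨ (d < b ∧ c' < b) ∨ (b < d ∧ b < c')) : c < b := by
  push Not at hc
  rcases hc' with ⟨-, rfl⟩ | ⟨-, hcb⟩ | ⟨hd, -⟩
  · exact h
  · exact h.trans hcb
  · exact lt_of_le_of_ne (hc.2.2 hd) (hc.1 hd.ne')

variable (b)

theorem wlt_xiAux_cons_append {c c' : A} (h : c < c') (s t : List A) (d : A) (p : List A) :
    wlt (xiAux b (d :: (p ++ c :: s))) (xiAux b (d :: (p ++ c' :: t))) := by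
  induction p generalizing d with
  | nil =>
    obtain ⟨u, hu⟩ := exists_xiAux_cons_eq b c s
    obtain ⟨v, hv⟩ := exists_xiAux_cons_eq b c' t
    simp only [List.nil_append, xiAux, hu, hv]
    split_ifs with hc hc' hc' <;> refine wlt_cons d ?_
    · exact wlt_cons b (wlt_cons_of_lt _ _ h)
    · exact wlt_cons_of_lt _ _ (lt_of_insert_not_insert h hc hc')
    · exact wlt_cons_of_lt _ _ (lt_of_not_insert_insert h hc hc')
    · exact wlt_cons_of_lt _ _ h
  | cons e p ih =>
    simp only [List.cons_append, xiAux]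
    split_ifs
    · exact wlt_cons d (wlt_cons b (ih e))
    · exact wlt_cons d (ih e)

theorem wlt_xi_append {c c' : A} (h : c < c') (p s t : List A) :
    wlt (xi b (p ++ c :: s)) (xi b (p ++ c' :: t)) := by
  cases p with
  | nil =>
    obtain ⟨u, hu⟩ := exists_xiAux_cons_eq b c s
    obtain ⟨v, hv⟩ := exists_xiAux_cons_eq b c' t
    simp only [List.nil_append, xi, List.head?_cons, Option.some.injEq, hu, hv]
    by_cases hc : c = b
    · subst hc
      rw [if_pos rfl, if_neg h.ne']
      exact wlt_cons_of_lt _ _ h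
    by_cases hc' : c' = b
    · subst hc'
      rw [if_neg hc, if_pos rfl]
      exact wlt_cons_of_lt _ _ h
    rw [if_neg hc, if_neg hc']
    exact wlt_cons_of_lt _ _ h
  | cons d p =>
    simp only [List.cons_append, xi, List.head?_cons, Option.some.injEq]
    split_ifs
    · exact wlt_cons b (wlt_xiAux_cons_append b h s t d p)
    · exact wlt_xiAux_cons_append b h s t d p

theorem wlt_xi_of_wlt {x x' : List A} (hlen : x.length = x'.length) (h : wlt x x') :
    wlt (xi b x) (xi b x') := by
  rcases h with ⟨hne, hpre⟩ | ⟨p, s, t, c, c', h, rfl, rfl⟩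
  · exact absurd (hpre.eq_of_length hlen.symm) hne
  · exact wlt_xi_append b h p s t

end Xi

theorem stmt16 {A : Type*} [LinearOrder A] (b : A) (x x' : List A)
    (hlen : x.length = x'.length) :
    wlt x x' ↔ wlt (xi b x) (xi b x') := by
  refine ⟨wlt_xi_of_wlt b hlen, fun h => ?_⟩
  rcases wlt_trichotomous x x' with hlt | rfl | hgt
  · exact hlt
  · exact absurd h (wlt_irrefl _)
  · exact absurd h (wlt_asymm (wlt_xi_of_wlt b hlen.symm hgt))
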